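/- Let f : ℝ → ℝ be twice continuously differentiable, and let y₀ satisfy f'(y₀) = 0 and f''(y) ≤ −λ < 0 for all y in an interval I = [y₀ − r, y₀ + r]. Let g : ℝ → ℝ be continuously differentiable with sup_{y∈I}|g'(y) − f'(y)| ≤ δ < λ r. If ŷ ∈ I satisfies g'(ŷ) = 0, then |ŷ − y₀| ≤ δ/λ. -/

import Mathlib

theorem Convex.mul_abs_sub_le_abs_image_sub_of_deriv_le_neg {D : Set ℝ} (hD : Convex ℝ D)
    {f : ℝ → ℝ} (hf : ContinuousOn f D) (hf' : DifferentiableOn ℝ f (interior D)) {C : ℝ}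
    (hf'_le : ∀ x ∈ interior D, deriv f x ≤ -C) {x y : ℝ} (hx : x ∈ D) (hy : y ∈ D) :
    C * |y - x| ≤ |f y - f x| := by
  wlog hxy : x ≤ y generalizing x y
  · rw [abs_sub_comm y, abs_sub_comm (f y)]
    exact this hy hx (le_of_not_ge hxy)
  have hdecr := hD.image_sub_le_mul_sub_of_deriv_le hf hf' hf'_le x hx y hy hxy
  rw [abs_of_nonneg (sub_nonneg.2 hxy), abs_sub_comm]
  linarith [le_abs_self (f x - f y)]

theorem critical_point_stability_general
    (f g : ℝ → ℝ) (hf : ContDiff ℝ 2 f)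
    (y₀ r lam δ : ℝ) (hlam : 0 < lam)
    (hcrit : deriv f y₀ = 0)
    (hcurv : ∀ y ∈ Set.Icc (y₀ - r) (y₀ + r), deriv (deriv f) y ≤ -lam)
    (hδ : ∀ y ∈ Set.Icc (y₀ - r) (y₀ + r), |deriv g y - deriv f y| ≤ δ)
    (yhat : ℝ) (hyhat : yhat ∈ Set.Icc (y₀ - r) (y₀ + r))
    (hghat : deriv g yhat = 0) :
    |yhat - y₀| ≤ δ / lam := by
  have hy₀ : y₀ ∈ Set.Icc (y₀ - r) (y₀ + r) := by
    constructor <;> linarith [hyhat.1, hyhat.2]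
  have hf' : Differentiable ℝ (deriv f) := hf.differentiable_deriv_two
  have hsep : lam * |yhat - y₀| ≤ |deriv f yhat - deriv f y₀| :=
    (convex_Icc _ _).mul_abs_sub_le_abs_image_sub_of_deriv_le_neg hf'.continuous.continuousOn
      hf'.differentiableOn (fun y hy => hcurv y (interior_subset hy)) hy₀ hyhat
  have hnear : |deriv f yhat| ≤ δ := by
    simpa [hghat, abs_sub_comm] using hδ yhat hyhat
  rw [hcrit, sub_zero] at hsep
  rw [le_div_iff₀' hlam]
  linarith

/-- Quantitative stability of nondegenerate critical points: a critical point
of g in I = [y₀−r, y₀+r] is within δ/λ of the critical point y₀ of f, when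
f'' ≤ −λ on I and sup_I |g' − f'| ≤ δ < λr. -/
theorem critical_point_stability
    (f g : ℝ → ℝ) (hf : ContDiff ℝ 2 f) (hg : ContDiff ℝ 1 g)
    (y₀ r lam δ : ℝ) (hr : 0 < r) (hlam : 0 < lam)
    (hcrit : deriv f y₀ = 0)
    (hcurv : ∀ y ∈ Set.Icc (y₀ - r) (y₀ + r), deriv (deriv f) y ≤ -lam)
    (hδ : ∀ y ∈ Set.Icc (y₀ - r) (y₀ + r), |deriv g y - deriv f y| ≤ δ)
    (hδr : δ < lam * r)
    (yhat : ℝ) (hyhat : yhat ∈ Set.Icc (y₀ - r) (y₀ + r))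
    (hghat : deriv g yhat = 0) :
    |yhat - y₀| ≤ δ / lam :=
  critical_point_stability_general f g hf y₀ r lam δ hlam hcrit hcurv hδ yhat hyhat hghat
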